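/- arXiv:1711.00563 — 3 statements merged into one kernel-verified Lean document; each statement's English description precedes it below -/
import Mathlib

section
/- Let A be either the set W₊² or the set W_M, and let φ : ℝ²ⁿ → ℝ²ⁿ be a C¹ diffeomorphism with Jacobian J(z) = |det Dφ(z)|. If the map U_φ defined by (U_φF)(z) = J(z)·F(φ(z)) satisfies U_φF ∈ A for every F ∈ A, then J(z) ≤ 1 for all z ∈ ℝ²ⁿ. -/
open MeasureTheory Complex Filter Matrix

noncomputable section

/-- Configuration space ℝⁿ. -/
abbrev Cfg (n : ℕ) := Fin n → ℝ

/-- Phase space ℝ²ⁿ = ℝⁿ × ℝⁿ, indexed by `Fin n ⊕ Fin n`. -/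
abbrev Phase (n : ℕ) := (Fin n ⊕ Fin n) → ℝ

/-- The cross-Wigner transform. -/
def wigner (n : ℕ) (f g : Cfg n → ℂ) (z : Phase n) : ℂ :=
  ∫ y : Cfg n,
    f (fun i => z (Sum.inl i) + y i / 2) *
      (starRingEnd ℂ) (g (fun i => z (Sum.inl i) - y i / 2)) *
      Complex.exp (-2 * Real.pi * Complex.I *
        ((∑ i, z (Sum.inr i) * y i : ℝ) : ℂ))

/-- The Heisenberg–Weyl operator ρ(z₀). -/
def heisenbergWeyl (n : ℕ) (z₀ : Phase n) (f : Cfg n → ℂ) : Cfg n → ℂ :=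
  fun x => Complex.exp (2 * Real.pi * Complex.I *
      ((∑ i, z₀ (Sum.inr i) * (x i - z₀ (Sum.inl i) / 2) : ℝ) : ℂ)) *
    f (fun i => x i - z₀ (Sum.inl i))

/-- The standard symplectic matrix J. -/
def Jmat (n : ℕ) : Matrix (Fin n ⊕ Fin n) (Fin n ⊕ Fin n) ℝ :=
  Matrix.fromBlocks 0 1 (-1) 0

def IsSymplecticMat (n : ℕ) (M : Matrix (Fin n ⊕ Fin n) (Fin n ⊕ Fin n) ℝ) : Prop :=
  Mᵀ * Jmat n * M = Jmat n

def IsAntisymplecticMat (n : ℕ) (M : Matrix (Fin n ⊕ Fin n) (Fin n ⊕ Fin n) ℝ) : Prop :=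
  Mᵀ * Jmat n * M = -(Jmat n)

def InSpT (n : ℕ) (M : Matrix (Fin n ⊕ Fin n) (Fin n ⊕ Fin n) ℝ) : Prop :=
  IsSymplecticMat n M ∨ IsAntisymplecticMat n M

def InSpPlus (n : ℕ) (M : Matrix (Fin n ⊕ Fin n) (Fin n ⊕ Fin n) ℝ) : Prop :=
  IsSymplecticMat n M ∧ M.IsSymm ∧ M.PosDef

/-- Jacobian. -/
def jac (n : ℕ) (φ : Phase n → Phase n) (z : Phase n) : ℝ :=
  |(fderiv ℝ φ z).det|

/-- U_φ. -/
def Uφ (n : ℕ) (φ : Phase n → Phase n) (F : Phase n → ℂ) (z : Phase n) : ℂ :=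
  (jac n φ z : ℂ) * F (φ z)

/-- The set W₊². -/
def WplusTwo (n : ℕ) : Set (Phase n → ℂ) :=
  {F | ∃ f : Cfg n → ℂ, MemLp f 2 (volume : Measure (Cfg n)) ∧
    eLpNorm f 2 (volume : Measure (Cfg n)) = 1 ∧ F = wigner n f f}

/-- The set W². -/
def Wtwo (n : ℕ) : Set (Phase n → ℂ) :=
  {F | ∃ f g : Cfg n → ℂ, MemLp f 2 (volume : Measure (Cfg n)) ∧
    MemLp g 2 (volume : Measure (Cfg n)) ∧ F = wigner n f g}

/-- Orthonormal family in L²(ℝⁿ). -/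
def IsONFamily (n : ℕ) (f : ℕ → Cfg n → ℂ) : Prop :=
  (∀ α, MemLp (f α) 2 (volume : Measure (Cfg n))) ∧
  ∀ α β, (∫ x, f α x * (starRingEnd ℂ) (f β x)) = if α = β then 1 else 0

/-- The set W_M of Wigner functions of density matrices. -/
def WM (n : ℕ) : Set (Phase n → ℂ) :=
  {F | ∃ (p : ℕ → ℝ) (f : ℕ → Cfg n → ℂ),
    IsONFamily n f ∧ (∀ α, 0 ≤ p α) ∧ HasSum p 1 ∧
    TendstoUniformly
      (fun N z => ∑ α ∈ Finset.range N, (p α : ℂ) * wigner n (f α) (f α) z) F atTop ∧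
    Tendsto
      (fun N => eLpNorm
        (fun z => F z - ∑ α ∈ Finset.range N, (p α : ℂ) * wigner n (f α) (f α) z)
        2 (volume : Measure (Phase n))) atTop (nhds 0)}

open scoped ENNReal ComplexConjugate

/-!
For normalized `f` and `g`, `|W(f,g)(z)| ≤ 2ⁿ`: substitute `y = 2u` in the Wigner integral
and apply Cauchy–Schwarz to `u ↦ f(x + u) · g(x - u)`. Both `W₊²` and `W_M` (whose elements are
convex combinations of such functions) therefore lie in the ball of radius `2ⁿ` in the sup norm.
The bound is attained: for `z₀ = φ(z)` and an even normalized `f₀`, the shifted state `ρ(z₀) f₀`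
has Wigner function equal to `2ⁿ` at `z₀`. So `|U_φ F (z)| = J(z) · 2ⁿ ≤ 2ⁿ` for
`F = W(ρ(z₀) f₀)`. To see that `F` lies in `W_M`, `f₀` is taken to be the indicator of the unit
cube, which extends to the orthonormal family of its integer translates along one axis.
-/

theorem eLpNorm_eq_one_of_integral_mul_conj {α : Type*} [MeasurableSpace α] {μ : Measure α}
    {f : α → ℂ} (hf : MemLp f 2 μ) (h : ∫ x, f x * conj (f x) ∂μ = 1) : eLpNorm f 2 μ = 1 := by
  have hsq : ∫ x, ‖f x‖ ^ 2 ∂μ = 1 := by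
    simp_rw [Complex.mul_conj', ← Complex.ofReal_pow, integral_complex_ofReal] at h
    exact_mod_cast h
  rw [hf.eLpNorm_eq_integral_rpow_norm two_ne_zero ENNReal.ofNat_ne_top]
  simp [hsq]

theorem integral_indicator_one_mul_conj {α : Type*} [MeasurableSpace α] {μ : Measure α}
    {s t : Set α} (hs : MeasurableSet s) (ht : MeasurableSet t) :
    ∫ x, s.indicator 1 x * conj (t.indicator (1 : α → ℂ) x) ∂μ = μ.real (s ∩ t) := by
  have hpointwise : ∀ x, s.indicator 1 x * conj (t.indicator (1 : α → ℂ) x) =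
      (s ∩ t).indicator (fun _ => (1 : ℂ)) x := by
    intro x
    by_cases hxs : x ∈ s <;> by_cases hxt : x ∈ t <;> simp [hxs, hxt]
  rw [integral_congr_ae (ae_of_all _ hpointwise), integral_indicator_const _ (hs.inter ht),
    Complex.real_smul, mul_one]

theorem norm_exp_two_pi_I_mul (t : ℝ) : ‖Complex.exp (2 * Real.pi * Complex.I * t)‖ = 1 := by
  rw [Complex.norm_exp]
  simp

theorem conj_exp_two_pi_I_mul (t : ℝ) :
    conj (Complex.exp (2 * Real.pi * Complex.I * t)) =
      Complex.exp (-2 * Real.pi * Complex.I * t) := by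
  rw [← Complex.exp_conj]
  simp [map_ofNat]

theorem exp_two_pi_I_mul_mul_conj (s t : ℝ) (u v : ℂ) :
    Complex.exp (2 * Real.pi * Complex.I * s) * u *
        conj (Complex.exp (2 * Real.pi * Complex.I * t) * v) =
      u * conj v * Complex.exp (2 * Real.pi * Complex.I * (s - t : ℝ)) := by
  rw [map_mul, conj_exp_two_pi_I_mul, Complex.ofReal_sub, mul_sub, sub_eq_add_neg, Complex.exp_add]
  ring_nf

theorem lintegral_comp_smul_addHaar {E : Type*} [NormedAddCommGroup E] [NormedSpace ℝ E]
    [MeasurableSpace E] [BorelSpace E] [FiniteDimensional ℝ E] (μ : Measure E) [μ.IsAddHaarMeasure]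
    (f : E → ℝ≥0∞) {r : ℝ} (hr : r ≠ 0) :
    ∫⁻ x, f (r • x) ∂μ = ENNReal.ofReal |(r ^ Module.finrank ℝ E)⁻¹| * ∫⁻ x, f x ∂μ := by
  rw [← smul_eq_mul, ← lintegral_smul_measure, ← Measure.map_addHaar_smul μ hr]
  exact (lintegral_map_equiv f (MeasurableEquiv.smul₀ r hr)).symm

instance instHolderTripleTwoTwoOne : ENNReal.HolderTriple 2 2 1 :=
  ⟨ENNReal.inv_two_add_inv_two.trans inv_one.symm⟩

theorem enorm_wigner_le {n : ℕ} {f g : Cfg n → ℂ} (hf : AEStronglyMeasurable f)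
    (hg : AEStronglyMeasurable g) (z : Phase n) :
    ‖wigner n f g z‖ₑ ≤ 2 ^ n * eLpNorm f 2 volume * eLpNorm g 2 volume := by
  set x₀ : Cfg n := fun i => z (Sum.inl i)
  have hintegrand : ∀ y : Cfg n, ‖f (fun i => z (Sum.inl i) + y i / 2) *
      (starRingEnd ℂ) (g (fun i => z (Sum.inl i) - y i / 2)) *
      Complex.exp (-2 * Real.pi * Complex.I * ((∑ i, z (Sum.inr i) * y i : ℝ) : ℂ))‖ₑ =
      ‖f (x₀ + (2:ℝ)⁻¹ • y) * g (x₀ - (2:ℝ)⁻¹ • y)‖ₑ := by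
    intro y
    have hphase : ‖Complex.exp (-2 * Real.pi * Complex.I *
        ((∑ i, z (Sum.inr i) * y i : ℝ) : ℂ))‖ = 1 := by
      rw [← conj_exp_two_pi_I_mul, Complex.norm_conj, norm_exp_two_pi_I_mul]
    rw [← ofReal_norm, ← ofReal_norm, norm_mul, norm_mul, norm_mul, hphase, mul_one,
      Complex.norm_conj]
    congr 4 <;> funext i <;> simp [x₀, div_eq_inv_mul]
  have hfr : Module.finrank ℝ (Cfg n) = n := Module.finrank_fin_fun ℝ
  have hadd : MeasurePreserving (fun u : Cfg n => x₀ + u) := measurePreserving_add_left volume x₀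
  have hneg : MeasurePreserving (fun u : Cfg n => x₀ - u) := by
    simpa [Function.comp_def, sub_eq_add_neg] using
      hadd.comp (Measure.measurePreserving_neg volume)
  calc ‖wigner n f g z‖ₑ
      ≤ ∫⁻ y, ‖f (x₀ + (2:ℝ)⁻¹ • y) * g (x₀ - (2:ℝ)⁻¹ • y)‖ₑ :=
        (enorm_integral_le_lintegral_enorm _).trans_eq (lintegral_congr hintegrand)
    _ = 2 ^ n * ∫⁻ u, ‖f (x₀ + u) * g (x₀ - u)‖ₑ := by
        rw [lintegral_comp_smul_addHaar volume (fun u => ‖f (x₀ + u) * g (x₀ - u)‖ₑ)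
          (inv_ne_zero two_ne_zero), hfr, inv_pow, inv_inv, abs_of_pos (by positivity),
          ENNReal.ofReal_pow zero_le_two,
          ENNReal.ofReal_ofNat]
    _ = 2 ^ n * eLpNorm (fun u => f (x₀ + u) * g (x₀ - u)) 1 volume := by
        rw [eLpNorm_one_eq_lintegral_enorm]
    _ ≤ 2 ^ n * (eLpNorm (f ∘ (x₀ + ·)) 2 volume * eLpNorm (g ∘ (x₀ - ·)) 2 volume) := by
        gcongr
        simpa using eLpNorm_le_eLpNorm_mul_eLpNorm'_of_norm (p := 2) (q := 2) (r := 1)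
          (hf.comp_measurePreserving hadd) (hg.comp_measurePreserving hneg) (· * ·) 1
          (ae_of_all _ fun u => by simp)
    _ = 2 ^ n * eLpNorm f 2 volume * eLpNorm g 2 volume := by
        rw [eLpNorm_comp_measurePreserving hf hadd, eLpNorm_comp_measurePreserving hg hneg,
          mul_assoc]

theorem norm_wigner_le_of_eLpNorm_eq_one {n : ℕ} {f g : Cfg n → ℂ}
    (hf : AEStronglyMeasurable f) (hg : AEStronglyMeasurable g)
    (hf1 : eLpNorm f 2 volume = 1) (hg1 : eLpNorm g 2 volume = 1) (z : Phase n) :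
    ‖wigner n f g z‖ ≤ 2 ^ n := by
  have h := enorm_wigner_le hf hg z
  rw [hf1, hg1, mul_one, mul_one, ← ofReal_norm, ← ENNReal.ofReal_ofNat 2,
    ← ENNReal.ofReal_pow zero_le_two, ENNReal.ofReal_le_ofReal_iff (by positivity)] at h
  exact h

theorem IsONFamily.eLpNorm_eq_one {n : ℕ} {f : ℕ → Cfg n → ℂ} (hf : IsONFamily n f) (α : ℕ) :
    eLpNorm (f α) 2 volume = 1 :=
  eLpNorm_eq_one_of_integral_mul_conj (hf.1 α) (by simpa using hf.2 α α)

theorem norm_le_of_mem_WplusTwo {n : ℕ} {F : Phase n → ℂ} (hF : F ∈ WplusTwo n) (z : Phase n) :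
    ‖F z‖ ≤ 2 ^ n := by
  obtain ⟨f, hf, hf1, rfl⟩ := hF
  exact norm_wigner_le_of_eLpNorm_eq_one hf.1 hf.1 hf1 hf1 z

theorem norm_le_of_mem_WM {n : ℕ} {F : Phase n → ℂ} (hF : F ∈ WM n) (z : Phase n) :
    ‖F z‖ ≤ 2 ^ n := by
  obtain ⟨p, f, hf, hp, hsum, hunif, -⟩ := hF
  have hterm (α : ℕ) : ‖(p α : ℂ) * wigner n (f α) (f α) z‖ ≤ p α * 2 ^ n := by
    rw [norm_mul, Complex.norm_real, Real.norm_of_nonneg (hp α)]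
    exact mul_le_mul_of_nonneg_left (norm_wigner_le_of_eLpNorm_eq_one (hf.1 α).1 (hf.1 α).1
      (hf.eLpNorm_eq_one α) (hf.eLpNorm_eq_one α) z) (hp α)
  refine le_of_tendsto (hunif.tendsto_at z).norm (Eventually.of_forall fun N => ?_)
  calc ‖∑ α ∈ Finset.range N, (p α : ℂ) * wigner n (f α) (f α) z‖
      ≤ ∑ α ∈ Finset.range N, p α * 2 ^ n := norm_sum_le_of_le _ fun α _ => hterm α
    _ = (∑ α ∈ Finset.range N, p α) * 2 ^ n := (Finset.sum_mul _ _ _).symm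
    _ ≤ 1 * 2 ^ n := by gcongr; exact sum_le_hasSum _ (fun α _ => hp α) hsum
    _ = 2 ^ n := one_mul _

theorem wigner_mem_WplusTwo_of_isONFamily {n : ℕ} {f : ℕ → Cfg n → ℂ} (hf : IsONFamily n f) :
    wigner n (f 0) (f 0) ∈ WplusTwo n :=
  ⟨f 0, hf.1 0, hf.eLpNorm_eq_one 0, rfl⟩

theorem wigner_mem_WM_of_isONFamily {n : ℕ} {f : ℕ → Cfg n → ℂ} (hf : IsONFamily n f) :
    wigner n (f 0) (f 0) ∈ WM n := by
  have hpartial : ∀ᶠ N in atTop, ∀ z, ∑ α ∈ Finset.range N,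
      ((if α = 0 then 1 else 0 : ℝ) : ℂ) * wigner n (f α) (f α) z = wigner n (f 0) (f 0) z :=
    (eventually_ge_atTop 1).mono fun N hN z => by
      rw [Finset.sum_eq_single_of_mem 0 (Finset.mem_range.mpr hN) (fun α _ hα => by simp [hα])]
      simp
  refine ⟨fun α => if α = 0 then 1 else 0, f, hf, fun α => by positivity, hasSum_ite_eq 0 1,
    ?_, ?_⟩
  · intro u hu
    filter_upwards [hpartial] with N hN z
    rw [hN z]
    exact refl_mem_uniformity hu
  · refine tendsto_const_nhds.congr' (hpartial.mono fun N hN => ?_)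
    simp [hN]

section HeisenbergWeyl

variable {n : ℕ} (z₀ : Phase n)

theorem heisenbergWeyl_mul_conj (f g : Cfg n → ℂ) (x : Cfg n) :
    heisenbergWeyl n z₀ f x * conj (heisenbergWeyl n z₀ g x) =
      f (x - fun i => z₀ (Sum.inl i)) * conj (g (x - fun i => z₀ (Sum.inl i))) := by
  rw [heisenbergWeyl, heisenbergWeyl, exp_two_pi_I_mul_mul_conj, sub_self, Complex.ofReal_zero,
    mul_zero, Complex.exp_zero, mul_one]
  rfl

theorem norm_heisenbergWeyl (f : Cfg n → ℂ) (x : Cfg n) :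
    ‖heisenbergWeyl n z₀ f x‖ = ‖f (x - fun i => z₀ (Sum.inl i))‖ := by
  rw [heisenbergWeyl, norm_mul, norm_exp_two_pi_I_mul, one_mul]
  rfl

theorem integral_heisenbergWeyl_mul_conj (f g : Cfg n → ℂ) :
    ∫ x, heisenbergWeyl n z₀ f x * conj (heisenbergWeyl n z₀ g x) = ∫ x, f x * conj (g x) := by
  simp_rw [heisenbergWeyl_mul_conj]
  exact integral_sub_right_eq_self (fun x => f x * conj (g x)) _

theorem aestronglyMeasurable_heisenbergWeyl {f : Cfg n → ℂ} (hf : AEStronglyMeasurable f) :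
    AEStronglyMeasurable (heisenbergWeyl n z₀ f) := by
  refine AEStronglyMeasurable.mul ?_ (hf.comp_measurePreserving (measurePreserving_sub_right _ _))
  exact Continuous.aestronglyMeasurable (by fun_prop)

theorem eLpNorm_heisenbergWeyl {f : Cfg n → ℂ} (hf : AEStronglyMeasurable f) (p : ℝ≥0∞) :
    eLpNorm (heisenbergWeyl n z₀ f) p volume = eLpNorm f p volume := by
  rw [← eLpNorm_comp_measurePreserving hf (measurePreserving_sub_right volume _)]
  exact eLpNorm_congr_norm_ae (ae_of_all _ (norm_heisenbergWeyl z₀ f))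

theorem memLp_heisenbergWeyl {f : Cfg n → ℂ} {p : ℝ≥0∞} (hf : MemLp f p) :
    MemLp (heisenbergWeyl n z₀ f) p :=
  ⟨aestronglyMeasurable_heisenbergWeyl z₀ hf.1, (eLpNorm_heisenbergWeyl z₀ hf.1 p).trans_lt hf.2⟩

theorem wigner_heisenbergWeyl (f g : Cfg n → ℂ) (z : Phase n) :
    wigner n (heisenbergWeyl n z₀ f) (heisenbergWeyl n z₀ g) z = wigner n f g (z - z₀) := by
  unfold wigner
  congr 1 with y
  rw [heisenbergWeyl, heisenbergWeyl, exp_two_pi_I_mul_mul_conj, mul_assoc, ← Complex.exp_add]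
  have hphase : ∑ i, (z (Sum.inr i) - z₀ (Sum.inr i)) * y i = ∑ i, z (Sum.inr i) * y i -
      (∑ i, z₀ (Sum.inr i) * (z (Sum.inl i) + y i / 2 - z₀ (Sum.inl i) / 2) -
        ∑ i, z₀ (Sum.inr i) * (z (Sum.inl i) - y i / 2 - z₀ (Sum.inl i) / 2)) := by
    simp only [← Finset.sum_sub_distrib]
    exact Finset.sum_congr rfl fun i _ => by ring
  simp only [Pi.sub_apply]
  congr 2
  · congr 1 with i; ring
  · congr 2 with i; ring
  · rw [hphase]
    push_cast
    ring

end HeisenbergWeyl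

theorem wigner_self_zero_of_even {n : ℕ} {f : Cfg n → ℂ} (hf : ∀ x, f (-x) = f x) :
    wigner n f f 0 = 2 ^ n * ∫ x, f x * conj (f x) := by
  have hintegrand : ∀ y : Cfg n, f (fun i => (0 : Phase n) (Sum.inl i) + y i / 2) *
      conj (f (fun i => (0 : Phase n) (Sum.inl i) - y i / 2)) *
      Complex.exp (-2 * Real.pi * Complex.I * ((∑ i, (0 : Phase n) (Sum.inr i) * y i : ℝ) : ℂ)) =
      f ((2:ℝ)⁻¹ • y) * conj (f ((2:ℝ)⁻¹ • y)) := by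
    intro y
    have hhalf : (fun i => (0 : Phase n) (Sum.inl i) + y i / 2) = (2:ℝ)⁻¹ • y := by
      funext i; simp [div_eq_inv_mul]
    have hneg : (fun i => (0 : Phase n) (Sum.inl i) - y i / 2) = -((2:ℝ)⁻¹ • y) := by
      funext i; simp [div_eq_inv_mul]
    rw [hhalf, hneg, hf]
    simp
  rw [wigner, integral_congr_ae (ae_of_all _ hintegrand),
    Measure.integral_comp_inv_smul_of_nonneg volume (fun x => f x * conj (f x)) zero_le_two,
    Module.finrank_fin_fun, Complex.real_smul]
  push_cast
  rfl

/-- `Cfg n` carries the sup norm, so `Metric.ball c (1 / 2)` is the open unit cube centred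
at `c`. -/
def cubeStates (n : ℕ) (i₀ : Fin n) (z₀ : Phase n) (k : ℕ) : Cfg n → ℂ :=
  heisenbergWeyl n z₀ ((Metric.ball ((k : ℝ) • Pi.single i₀ 1) (1 / 2)).indicator 1)

section CubeStates

variable {n : ℕ}

theorem volume_ball_half (c : Cfg n) : volume (Metric.ball c (1 / 2)) = 1 := by
  rw [Real.volume_pi_ball c one_half_pos]
  norm_num

theorem disjoint_ball_half_smul_single (i₀ : Fin n) {k l : ℕ} (hkl : k ≠ l) :
    Disjoint (Metric.ball ((k : ℝ) • Pi.single i₀ 1 : Cfg n) (1 / 2))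
      (Metric.ball ((l : ℝ) • Pi.single i₀ 1) (1 / 2)) := by
  refine Metric.ball_disjoint_ball ?_
  rw [dist_eq_norm, ← sub_smul, norm_smul, Pi.norm_single, norm_one, mul_one, Real.norm_eq_abs,
    add_halves]
  exact_mod_cast Int.one_le_abs (sub_ne_zero.mpr (Nat.cast_injective.ne hkl : (k : ℤ) ≠ l))

theorem isONFamily_cubeStates (i₀ : Fin n) (z₀ : Phase n) : IsONFamily n (cubeStates n i₀ z₀) := by
  refine ⟨fun k => memLp_heisenbergWeyl z₀ ?_, fun k l => ?_⟩
  · exact memLp_indicator_const 2 Metric.isOpen_ball.measurableSet 1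
      (Or.inr measure_ball_lt_top.ne)
  rw [cubeStates, cubeStates, integral_heisenbergWeyl_mul_conj,
    integral_indicator_one_mul_conj Metric.isOpen_ball.measurableSet
      Metric.isOpen_ball.measurableSet]
  split_ifs with hkl
  · rw [hkl, Set.inter_self, measureReal_def, volume_ball_half]
    simp
  · rw [(disjoint_ball_half_smul_single i₀ hkl).inter_eq]
    simp

theorem wigner_cubeStates_zero (i₀ : Fin n) (z₀ : Phase n) :
    wigner n (cubeStates n i₀ z₀ 0) (cubeStates n i₀ z₀ 0) z₀ = 2 ^ n := by
  have hnorm := (isONFamily_cubeStates i₀ z₀).2 0 0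
  rw [cubeStates, integral_heisenbergWeyl_mul_conj] at hnorm
  rw [cubeStates, wigner_heisenbergWeyl, sub_self, wigner_self_zero_of_even, hnorm]
  · simp
  · intro x
    simp only [Nat.cast_zero, zero_smul, Set.indicator, Metric.mem_ball, dist_zero_right, norm_neg,
      Pi.one_apply]

end CubeStates

theorem jac_nonneg (n : ℕ) (φ : Phase n → Phase n) (z : Phase n) : 0 ≤ jac n φ z :=
  abs_nonneg _

theorem stmt4_general (n : ℕ) (A : Set (Phase n → ℂ)) (hA : A = WplusTwo n ∨ A = WM n)
    (φ : Phase n → Phase n)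
    (hU : ∀ F ∈ A, Uφ n φ F ∈ A) :
    ∀ z, jac n φ z ≤ 1 := by
  intro z
  rcases Nat.eq_zero_or_pos n with rfl | hn
  · simp [jac, LinearMap.det_eq_one_of_subsingleton]
  set f := cubeStates n ⟨0, hn⟩ (φ z)
  have hf : IsONFamily n f := isONFamily_cubeStates _ _
  obtain ⟨hmem, hA_bound⟩ : wigner n (f 0) (f 0) ∈ A ∧ ∀ F ∈ A, ‖F z‖ ≤ 2 ^ n := by
    rcases hA with rfl | rfl
    exacts [⟨wigner_mem_WplusTwo_of_isONFamily hf, fun F hF => norm_le_of_mem_WplusTwo hF z⟩,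
      ⟨wigner_mem_WM_of_isONFamily hf, fun F hF => norm_le_of_mem_WM hF z⟩]
  have hbound := hA_bound _ (hU _ hmem)
  rw [Uφ, wigner_cubeStates_zero, norm_mul, Complex.norm_real, norm_pow, Complex.norm_ofNat,
    Real.norm_of_nonneg (jac_nonneg n φ z)] at hbound
  exact (mul_le_iff_le_one_left (by positivity)).mp hbound

/-- Lemma on the Jacobian. -/
theorem stmt4 (n : ℕ) (A : Set (Phase n → ℂ)) (hA : A = WplusTwo n ∨ A = WM n)
    (φ ψ : Phase n → Phase n)
    (hφ : ContDiff ℝ 1 φ) (hψ : ContDiff ℝ 1 ψ)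
    (hl : Function.LeftInverse ψ φ) (hr : Function.RightInverse ψ φ)
    (hU : ∀ F ∈ A, Uφ n φ F ∈ A) :
    ∀ z, jac n φ z ≤ 1 :=
  stmt4_general n A hA φ hU

end
end

section
/- Let φ : ℝ²ⁿ → ℝ²ⁿ be a C¹ diffeomorphism with Jacobian J(z) = |det Dφ(z)| satisfying 0 < J(z) ≤ 1 for all z ∈ ℝ²ⁿ. Suppose that for every Σ ∈ Sp⁺(n) there exist Λ_Σ ∈ Sp⁺(n) and z_Σ ∈ ℝ²ⁿ such that ln J(z) − 2π·φ(z)·Σ⁻¹φ(z) = −2π·(z − z_Σ)·Λ_Σ⁻¹(z − z_Σ) for all z ∈ ℝ²ⁿ. Then φ is affine: there exist an invertible real 2n×2n matrix M and a ∈ ℝ²ⁿ with φ(z) = Mz + a for all z. -/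
open MeasureTheory Complex Filter Matrix

noncomputable section

/-!
Subtracting the Gaussian identities for two matrices `Σ₁, Σ₂ ∈ Sp⁺(n)` eliminates `ln J`, so
`φ(z)·(Σ₁⁻¹ - Σ₂⁻¹)φ(z)` is a quadratic polynomial in `z`. Since `Sp⁺(n)` is closed under
inversion, these differences span all symmetric matrices (block-diagonal `diag(A, A⁻¹)` and their
congruences by symplectic shears suffice), so every product `φₐ φ_b` is a quadratic polynomial.
At the zero `z₀ = ψ 0` of `φ`, differentiability kills the linear term of `t ↦ φₐ φ_b (z₀ + t w)`,
so `φ(z₀ + t w) ⊗ φ(z₀ + t w) = t² φ(z₀ + w) ⊗ φ(z₀ + w)`; by continuity the sign is constant on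
`t > 0`, so `φ` is homogeneous on rays from `z₀` and hence equals its derivative there.
-/

namespace Matrix

variable {m : Type*} [Fintype m] [DecidableEq m]

omit [DecidableEq m] in
theorem PosDef.fromBlocks_zero {l : Type*} [Fintype l] {A : Matrix m m ℝ} {D : Matrix l l ℝ}
    (hA : A.PosDef) (hD : D.PosDef) : (fromBlocks A 0 0 D).PosDef := by
  refine .of_dotProduct_mulVec_pos (hA.1.fromBlocks (by simp) hD.1) fun x hx => ?_
  obtain ⟨u, v, rfl⟩ : ∃ u v, x = u ⊕ᵥ v := ⟨_, _, (Sum.elim_comp_inl_inr x).symm⟩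
  have huv : u ≠ 0 ∨ v ≠ 0 := by contrapose! hx; simp [hx]
  have hA' := hA.posSemidef.dotProduct_mulVec_nonneg u
  have hD' := hD.posSemidef.dotProduct_mulVec_nonneg v
  simp only [fromBlocks_mulVec, zero_mulVec, add_zero, zero_add, star_trivial,
    sumElim_dotProduct_sumElim] at hA' hD' ⊢
  rcases huv with hu | hv
  · exact add_pos_of_pos_of_nonneg (by simpa using hA.dotProduct_mulVec_pos hu) hD'
  · exact add_pos_of_nonneg_of_pos hA' (by simpa using hD.dotProduct_mulVec_pos hv)

omit [Fintype m] in
theorem isSymm_single_add_single (i j : m) : (single i j (1 : ℝ) + single j i 1).IsSymm := by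
  simp [IsSymm, transpose_add, add_comm]

theorem dotProduct_single_one_mulVec (i j : m) (x y : m → ℝ) :
    x ⬝ᵥ single i j 1 *ᵥ y = x i * y j := by
  simp [single_mulVec, dotProduct, Function.update_apply]

theorem posDef_one_add_single_add_single (i j : m) :
    (1 + (2⁻¹ : ℝ) • (single i j 1 + single j i 1) : Matrix m m ℝ).PosDef := by
  refine .of_dotProduct_mulVec_pos ?_ fun x hx => ?_
  · exact isHermitian_iff_isSymm.2 (isSymm_one.add ((isSymm_single_add_single i j).smul _))
  · have hform : star x ⬝ᵥ (1 + (2⁻¹ : ℝ) • (single i j 1 + single j i 1)) *ᵥ x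
        = x ⬝ᵥ x + x i * x j := by
      simp only [star_trivial, add_mulVec, one_mulVec, smul_mulVec, dotProduct_add,
        dotProduct_smul, dotProduct_single_one_mulVec, smul_eq_mul]
      ring
    have hxx : 0 < x ⬝ᵥ x := by simpa using dotProduct_star_self_pos_iff.mpr hx
    rw [hform]
    rcases eq_or_ne i j with rfl | hij
    · nlinarith [sq_nonneg (x i)]
    · have hle : x i * x i + x j * x j ≤ x ⬝ᵥ x := by
        simpa [Finset.sum_pair hij, dotProduct] using Finset.sum_le_sum_of_subset_of_nonneg
          (Finset.subset_univ {i, j}) fun u _ _ => mul_self_nonneg (x u)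
      nlinarith [sq_nonneg (x i + x j)]

theorem mem_of_isSymm_of_forall_posDef_mem {V : Submodule ℝ (Matrix m m ℝ)}
    (hV : ∀ A : Matrix m m ℝ, A.PosDef → A ∈ V) {B : Matrix m m ℝ} (hB : B.IsSymm) : B ∈ V := by
  have hE : ∀ i j, single i j (1 : ℝ) + single j i 1 ∈ V := fun i j => by
    have := V.smul_mem 2 (V.sub_mem (hV _ (posDef_one_add_single_add_single i j)) (hV 1 .one))
    convert this using 1
    module
  have hB2 : B = (2⁻¹ : ℝ) • ∑ i, ∑ j, B i j • (single i j 1 + single j i 1) := by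
    have hsum : ∑ i, ∑ j, single j i (B i j) = B := by
      conv_rhs => rw [matrix_eq_sum_single B]
      rw [Finset.sum_comm]
      simp_rw [hB.apply]
    simp only [smul_add, Finset.sum_add_distrib, smul_single, smul_eq_mul, mul_one]
    rw [hsum, ← matrix_eq_sum_single]
    module
  rw [hB2]
  exact V.smul_mem _ (V.sum_mem fun i _ => V.sum_mem fun j _ => V.smul_mem _ (hE i j))

end Matrix

section Symplectic

variable {n : ℕ}

theorem isSymplecticMat_iff_mem_symplecticGroup {M : Matrix (Fin n ⊕ Fin n) (Fin n ⊕ Fin n) ℝ} :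
    IsSymplecticMat n M ↔ M ∈ symplecticGroup (Fin n) ℝ := by
  have hJ : Jmat n = -J (Fin n) ℝ := by simp [Jmat, J, fromBlocks_neg]
  rw [SymplecticGroup.mem_iff', IsSymplecticMat, hJ, mul_neg, neg_mul, neg_inj]

theorem InSpPlus.inv {S : Matrix (Fin n ⊕ Fin n) (Fin n ⊕ Fin n) ℝ} (hS : InSpPlus n S) :
    InSpPlus n S⁻¹ := by
  obtain ⟨hsymp, hsymm, hpos⟩ := hS
  rw [isSymplecticMat_iff_mem_symplecticGroup] at hsymp
  refine ⟨isSymplecticMat_iff_mem_symplecticGroup.2 ?_, hsymm.inv, hpos.inv⟩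
  rw [← SymplecticGroup.coe_inv' ⟨S, hsymp⟩]
  exact (⟨S, hsymp⟩⁻¹ : symplecticGroup (Fin n) ℝ).2

theorem InSpPlus.transpose_mul_mul {S U : Matrix (Fin n ⊕ Fin n) (Fin n ⊕ Fin n) ℝ}
    (hS : InSpPlus n S) (hU : U ∈ symplecticGroup (Fin n) ℝ) : InSpPlus n (Uᵀ * S * U) := by
  obtain ⟨hsymp, hsymm, hpos⟩ := hS
  rw [isSymplecticMat_iff_mem_symplecticGroup] at hsymp
  refine ⟨isSymplecticMat_iff_mem_symplecticGroup.2 ?_, ?_, ?_⟩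
  · exact mul_mem (mul_mem (SymplecticGroup.transpose_mem hU) hsymp) hU
  · simp [IsSymm, transpose_mul, hsymm.eq, Matrix.mul_assoc]
  · refine hpos.conjTranspose_mul_mul_same (mulVec_injective_iff_isUnit.2 ?_)
    exact (isUnit_iff_isUnit_det U).2 (SymplecticGroup.symplectic_det hU)

theorem inSpPlus_fromBlocks_inv {A : Matrix (Fin n) (Fin n) ℝ} (hA : A.PosDef) :
    InSpPlus n (fromBlocks A 0 0 A⁻¹) := by
  have hsymm : A.IsSymm := isHermitian_iff_isSymm.1 hA.1
  refine ⟨?_, .fromBlocks hsymm (by simp) hsymm.inv, hA.fromBlocks_zero hA.inv⟩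
  rw [isSymplecticMat_iff_mem_symplecticGroup, SymplecticGroup.fromBlocks_mem_iff]
  simp [hsymm.eq, mul_nonsing_inv A ((isUnit_iff_isUnit_det A).1 hA.isUnit)]

theorem inSpPlus_fromBlocks_mul {A L : Matrix (Fin n) (Fin n) ℝ} (hA : A.PosDef)
    (hL : L.IsSymm) : InSpPlus n (fromBlocks A (A * L) (L * A) (L * A * L + A⁻¹)) := by
  have hU : fromBlocks 1 L 0 1 ∈ symplecticGroup (Fin n) ℝ := by
    rw [SymplecticGroup.fromBlocks_mem_iff]
    simp [hL.eq]
  convert (inSpPlus_fromBlocks_inv hA).transpose_mul_mul hU using 1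
  simp [fromBlocks_transpose, fromBlocks_multiply, hL.eq, Matrix.mul_assoc]

end Symplectic

section SpanOfDifferences

variable {n : ℕ} {W : Submodule ℝ (Matrix (Fin n ⊕ Fin n) (Fin n ⊕ Fin n) ℝ)}
  (hW : ∀ S₁ S₂, InSpPlus n S₁ → InSpPlus n S₂ → S₁ - S₂ ∈ W)
include hW

theorem fromBlocks_posDef_zero_mem {A : Matrix (Fin n) (Fin n) ℝ} (hA : A.PosDef) :
    fromBlocks A 0 0 0 ∈ W ∧ fromBlocks 0 0 0 A⁻¹ ∈ W := by
  have hdet := (isUnit_iff_isUnit_det A).1 hA.isUnit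
  have h₂ := hW _ _ (inSpPlus_fromBlocks_inv hA)
    (inSpPlus_fromBlocks_inv (hA.smul (two_pos : (0 : ℝ) < 2)))
  have h₃ := hW _ _ (inSpPlus_fromBlocks_inv hA)
    (inSpPlus_fromBlocks_inv (hA.smul (inv_pos.2 (two_pos : (0 : ℝ) < 2))))
  have hinv : ∀ c : ℝ, c ≠ 0 → (c • A)⁻¹ = c⁻¹ • A⁻¹ := fun c hc => by
    simpa [Units.smul_def] using inv_smul' A (Units.mk0 c hc) hdet
  rw [hinv 2 two_ne_zero] at h₂
  rw [hinv 2⁻¹ (inv_ne_zero two_ne_zero)] at h₃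
  -- `h₂` and `h₃` say `diag(-A, A⁻¹/2) ∈ W` and `diag(A/2, -A⁻¹) ∈ W`.
  constructor
  · convert W.add_mem (W.smul_mem (-4 / 3 : ℝ) h₂) (W.smul_mem (-2 / 3 : ℝ) h₃) using 1
    simp only [sub_eq_add_neg, fromBlocks_neg, fromBlocks_smul, fromBlocks_add, fromBlocks_inj]
    refine ⟨?_, ?_, ?_, ?_⟩ <;> module
  · convert W.add_mem (W.smul_mem (-2 / 3 : ℝ) h₂) (W.smul_mem (-4 / 3 : ℝ) h₃) using 1
    simp only [sub_eq_add_neg, fromBlocks_neg, fromBlocks_smul, fromBlocks_add, fromBlocks_inj]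
    refine ⟨?_, ?_, ?_, ?_⟩ <;> module

theorem fromBlocks_isSymm_zero_mem {B : Matrix (Fin n) (Fin n) ℝ} (hB : B.IsSymm) :
    fromBlocks B 0 0 0 ∈ W ∧ fromBlocks 0 0 0 B ∈ W := by
  let embed₁₁ : Matrix (Fin n) (Fin n) ℝ →ₗ[ℝ] Matrix (Fin n ⊕ Fin n) (Fin n ⊕ Fin n) ℝ :=
    { toFun A := fromBlocks A 0 0 0
      map_add' _ _ := by simp [fromBlocks_add]
      map_smul' _ _ := by simp [fromBlocks_smul] }
  let embed₂₂ : Matrix (Fin n) (Fin n) ℝ →ₗ[ℝ] Matrix (Fin n ⊕ Fin n) (Fin n ⊕ Fin n) ℝ :=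
    { toFun A := fromBlocks 0 0 0 A
      map_add' _ _ := by simp [fromBlocks_add]
      map_smul' _ _ := by simp [fromBlocks_smul] }
  refine ⟨mem_of_isSymm_of_forall_posDef_mem (V := W.comap embed₁₁) (fun A hA => ?_) hB,
    mem_of_isSymm_of_forall_posDef_mem (V := W.comap embed₂₂) (fun A hA => ?_) hB⟩
  · exact (fromBlocks_posDef_zero_mem hW hA).1
  · simpa [embed₂₂, nonsing_inv_nonsing_inv _ ((isUnit_iff_isUnit_det A).1 hA.isUnit)] using
      (fromBlocks_posDef_zero_mem hW hA.inv).2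

theorem fromBlocks_zero_transpose_mem (K : Matrix (Fin n) (Fin n) ℝ) :
    fromBlocks 0 K Kᵀ 0 ∈ W := by
  let embed₁₂ : Matrix (Fin n) (Fin n) ℝ →ₗ[ℝ] Matrix (Fin n ⊕ Fin n) (Fin n ⊕ Fin n) ℝ :=
    { toFun K := fromBlocks 0 K Kᵀ 0
      map_add' _ _ := by simp [fromBlocks_add]
      map_smul' _ _ := by simp [fromBlocks_smul] }
  have hposDef : ∀ {A L : Matrix (Fin n) (Fin n) ℝ}, A.PosDef → L.IsSymm →
      A * L ∈ W.comap embed₁₂ := by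
    intro A L hA hL
    change fromBlocks 0 (A * L) (A * L)ᵀ 0 ∈ W
    rw [transpose_mul, hL.eq, (isHermitian_iff_isSymm.1 hA.1).eq]
    have hT := hW _ _ (inSpPlus_fromBlocks_mul hA hL) (inSpPlus_fromBlocks_inv hA)
    have hLAL := (fromBlocks_isSymm_zero_mem hW (B := L * A * L) (by
      simp [IsSymm, transpose_mul, hL.eq, (isHermitian_iff_isSymm.1 hA.1).eq,
        Matrix.mul_assoc])).2
    -- `[[A, AL], [LA, LAL + A⁻¹]] - diag(A, A⁻¹) - diag(0, LAL) = [[0, AL], [LA, 0]]`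
    convert W.sub_mem hT hLAL using 1
    simp [sub_eq_add_neg, fromBlocks_neg, fromBlocks_add]
  have hsymm : ∀ {P L : Matrix (Fin n) (Fin n) ℝ}, P.IsSymm → L.IsSymm →
      P * L ∈ W.comap embed₁₂ :=
    fun hP hL => mem_of_isSymm_of_forall_posDef_mem
      (V := (W.comap embed₁₂).comap (LinearMap.mulRight ℝ _)) (fun A hA => hposDef hA hL) hP
  have hsingle : ∀ i j, single i j (1 : ℝ) ∈ W.comap embed₁₂ := by
    intro i j
    rcases eq_or_ne i j with rfl | hij
    · simpa using hsymm (transpose_single i i (1 : ℝ)) (transpose_single i i (1 : ℝ))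
    -- `single i j 1 = single i i 1 * (single i j 1 + single j i 1)` for `i ≠ j`
    · simpa [mul_add, hij] using
        hsymm (transpose_single i i (1 : ℝ)) (isSymm_single_add_single i j)
  change K ∈ W.comap embed₁₂
  rw [matrix_eq_sum_single K]
  refine Submodule.sum_mem _ fun i _ => Submodule.sum_mem _ fun j _ => ?_
  simpa [smul_single] using (W.comap embed₁₂).smul_mem (K i j) (hsingle i j)

theorem mem_of_isSymm_of_forall_inSpPlus_sub_mem
    {B : Matrix (Fin n ⊕ Fin n) (Fin n ⊕ Fin n) ℝ} (hB : B.IsSymm) : B ∈ W := by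
  rw [← fromBlocks_toBlocks B] at hB ⊢
  obtain ⟨h₁₁, h₁₂, -, h₂₂⟩ := isSymm_fromBlocks_iff.1 hB
  have hsplit : fromBlocks B.toBlocks₁₁ B.toBlocks₁₂ B.toBlocks₂₁ B.toBlocks₂₂ =
      fromBlocks B.toBlocks₁₁ 0 0 0 + fromBlocks 0 0 0 B.toBlocks₂₂ +
        fromBlocks 0 B.toBlocks₁₂ B.toBlocks₁₂ᵀ 0 := by
    simp [fromBlocks_add, h₁₂]
  rw [hsplit]
  exact W.add_mem (W.add_mem (fromBlocks_isSymm_zero_mem hW h₁₁).1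
    (fromBlocks_isSymm_zero_mem hW h₂₂).2) (fromBlocks_zero_transpose_mem hW _)

end SpanOfDifferences

section QuadraticPolynomials

variable {ι : Type*} [Fintype ι]

variable (ι) in
def quadraticPolynomials : Submodule ℝ ((ι → ℝ) → ℝ) where
  carrier := {p | ∃ (Q : Matrix ι ι ℝ) (b : ι → ℝ) (c : ℝ), ∀ z, p z = z ⬝ᵥ Q *ᵥ z + b ⬝ᵥ z + c}
  add_mem' := by
    rintro p q ⟨Q, b, c, hp⟩ ⟨Q', b', c', hq⟩
    refine ⟨Q + Q', b + b', c + c', fun z => ?_⟩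
    simp only [Pi.add_apply, hp, hq, add_mulVec, dotProduct_add, add_dotProduct]
    ring
  zero_mem' := ⟨0, 0, 0, by simp⟩
  smul_mem' := by
    rintro a p ⟨Q, b, c, hp⟩
    refine ⟨a • Q, a • b, a * c, fun z => ?_⟩
    simp only [Pi.smul_apply, hp, smul_mulVec, dotProduct_smul, smul_dotProduct, smul_eq_mul]
    ring

theorem sub_dotProduct_mulVec_sub_mem_quadraticPolynomials (N : Matrix ι ι ℝ) (w : ι → ℝ) :
    (fun z => (z - w) ⬝ᵥ N *ᵥ (z - w)) ∈ quadraticPolynomials ι := by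
  refine ⟨N, -(N *ᵥ w + Nᵀ *ᵥ w), w ⬝ᵥ N *ᵥ w, fun z => ?_⟩
  have hwz : w ⬝ᵥ N *ᵥ z = Nᵀ *ᵥ w ⬝ᵥ z := by
    rw [dotProduct_mulVec, mulVec_transpose]
  simp only [mulVec_sub, dotProduct_sub, sub_dotProduct, neg_dotProduct, add_dotProduct, hwz,
    dotProduct_comm z (N *ᵥ w)]
  ring

theorem exists_apply_add_smul_eq {p : (ι → ℝ) → ℝ} (hp : p ∈ quadraticPolynomials ι)
    (z w : ι → ℝ) : ∃ α β : ℝ, ∀ t : ℝ, p (z + t • w) = p z + α * t + β * t ^ 2 := by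
  obtain ⟨Q, b, c, hp⟩ := hp
  refine ⟨z ⬝ᵥ Q *ᵥ w + w ⬝ᵥ Q *ᵥ z + b ⬝ᵥ w, w ⬝ᵥ Q *ᵥ w, fun t => ?_⟩
  simp only [hp, mulVec_add, mulVec_smul, dotProduct_add, add_dotProduct, dotProduct_smul,
    smul_dotProduct, smul_eq_mul]
  ring

end QuadraticPolynomials

section QuadFormAlong

variable {X ι κ : Type*} [Fintype ι] [Fintype κ]

def quadFormAlong (f : X → κ → ℝ) : Matrix κ κ ℝ →ₗ[ℝ] X → ℝ where
  toFun C z := f z ⬝ᵥ C *ᵥ f z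
  map_add' C D := by ext z; simp [add_mulVec, dotProduct_add]
  map_smul' c C := by ext z; simp [smul_mulVec, dotProduct_smul]

theorem sub_mem_comap_quadFormAlong {f : (ι → ℝ) → κ → ℝ} {ℓ : (ι → ℝ) → ℝ} {c : ℝ}
    (hc : c ≠ 0) {C₁ C₂ : Matrix κ κ ℝ} {N₁ N₂ : Matrix ι ι ℝ} {w₁ w₂ : ι → ℝ}
    (h₁ : ∀ z, ℓ z - c * (f z ⬝ᵥ C₁ *ᵥ f z) = -c * ((z - w₁) ⬝ᵥ N₁ *ᵥ (z - w₁)))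
    (h₂ : ∀ z, ℓ z - c * (f z ⬝ᵥ C₂ *ᵥ f z) = -c * ((z - w₂) ⬝ᵥ N₂ *ᵥ (z - w₂))) :
    C₁ - C₂ ∈ (quadraticPolynomials ι).comap (quadFormAlong f) := by
  have hdiff : quadFormAlong f (C₁ - C₂) =
      (fun z => (z - w₁) ⬝ᵥ N₁ *ᵥ (z - w₁)) - fun z => (z - w₂) ⬝ᵥ N₂ *ᵥ (z - w₂) := by
    ext z
    simp only [map_sub, Pi.sub_apply, quadFormAlong, LinearMap.coe_mk, AddHom.coe_mk]
    refine mul_left_cancel₀ hc ?_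
    linear_combination h₂ z - h₁ z
  rw [Submodule.mem_comap, hdiff]
  exact sub_mem (sub_dotProduct_mulVec_sub_mem_quadraticPolynomials _ _)
    (sub_dotProduct_mulVec_sub_mem_quadraticPolynomials _ _)

variable [DecidableEq κ]

theorem quadFormAlong_single_add_single (f : X → κ → ℝ) (a b : κ) :
    quadFormAlong f (single a b 1 + single b a 1) = fun z => 2 * (f z a * f z b) := by
  ext z
  simp only [quadFormAlong, LinearMap.coe_mk, AddHom.coe_mk, add_mulVec, dotProduct_add,
    dotProduct_single_one_mulVec]
  ring

theorem mul_apply_mem_quadraticPolynomials {f : (ι → ℝ) → κ → ℝ}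
    (hf : ∀ B : Matrix κ κ ℝ, B.IsSymm → B ∈ (quadraticPolynomials ι).comap (quadFormAlong f))
    (a b : κ) : (fun z => f z a * f z b) ∈ quadraticPolynomials ι := by
  have hab := hf _ (isSymm_single_add_single a b)
  rw [Submodule.mem_comap, quadFormAlong_single_add_single] at hab
  convert Submodule.smul_mem _ (2⁻¹ : ℝ) hab using 1
  ext z
  simp only [Pi.smul_apply, smul_eq_mul]
  ring

end QuadFormAlong

theorem mul_eq_sq_mul_of_hasDerivAt {u v : ℝ → ℝ} {u' v' α β : ℝ} (hu : HasDerivAt u u' 0)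
    (hv : HasDerivAt v v' 0) (hu0 : u 0 = 0) (hv0 : v 0 = 0)
    (huv : ∀ t, u t * v t = α * t + β * t ^ 2) (t : ℝ) : u t * v t = t ^ 2 * (u 1 * v 1) := by
  have hα : α = 0 := by
    have h₁ : HasDerivAt (fun t => u t * v t) 0 0 := by
      simpa [hu0, hv0] using hu.fun_mul hv
    have h₂ : HasDerivAt (fun t => α * t + β * t ^ 2) α 0 := by
      simpa using ((hasDerivAt_id' 0).const_mul α).fun_add ((hasDerivAt_pow 2 0).const_mul β)
    rw [funext huv] at h₁
    exact h₂.unique h₁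
  rw [huv, huv, hα]
  ring

theorem eq_smul_of_mul_eq_sq_mul {κ : Type*} {g : ℝ → κ → ℝ} (hg : Continuous g)
    (hsq : ∀ t a b, g t a * g t b = t ^ 2 * (g 1 a * g 1 b)) {t : ℝ} (ht : 0 < t) :
    g t = t • g 1 := by
  by_cases h1 : g 1 = 0
  · ext a
    simpa [h1] using hsq t a a
  obtain ⟨a, ha⟩ := Function.ne_iff.1 h1
  have hta : g t a = t * g 1 a := by
    refine isPreconnected_Ioi.eq_of_sq_eq (f := fun t => g t a) (g := fun t => t * g 1 a)
      (continuous_apply a |>.comp hg).continuousOn (by fun_prop) (fun s _ => ?_)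
      (fun hs => mul_ne_zero (ne_of_gt hs) ha) (Set.mem_Ioi.2 one_pos) (one_mul _).symm ht
    simp only [Pi.pow_apply]
    rw [sq, hsq]
    ring
  ext b
  have hne : t * g 1 a ≠ 0 := mul_ne_zero ht.ne' ha
  refine mul_left_cancel₀ hne ?_
  rw [← hta, hsq, Pi.smul_apply, smul_eq_mul, hta]
  ring

theorem eq_of_hasDerivAt_of_eq_smul {E : Type*} [NormedAddCommGroup E] [NormedSpace ℝ E]
    {g : ℝ → E} {g' : E} (hg : HasDerivAt g g' 0) (h0 : g 0 = 0)
    (hray : ∀ t, 0 < t → g t = t • g 1) : g 1 = g' := by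
  have hlin : HasDerivWithinAt g (g 1) (Set.Ici 0) 0 := by
    have hsmul := ((hasDerivAt_id' (0 : ℝ)).smul_const (g 1)).hasDerivWithinAt (s := Set.Ici 0)
    rw [one_smul] at hsmul
    refine hsmul.congr_of_mem (fun t ht => ?_) Set.self_mem_Ici
    rcases (Set.mem_Ici.1 ht).eq_or_lt with rfl | ht
    · simp [h0]
    · exact hray t ht
  exact (uniqueDiffOn_Ici 0 0 Set.self_mem_Ici).eq_deriv _ hlin hg.hasDerivWithinAt

theorem apply_add_eq_fderiv_of_mul_mem_quadraticPolynomials {ι κ : Type*} [Fintype ι]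
    [Fintype κ] {f : (ι → ℝ) → κ → ℝ} (hf : Continuous f) {z₀ : ι → ℝ}
    (hd : DifferentiableAt ℝ f z₀) (h0 : f z₀ = 0)
    (hmul : ∀ a b, (fun z => f z a * f z b) ∈ quadraticPolynomials ι) (w : ι → ℝ) :
    f (z₀ + w) = fderiv ℝ f z₀ w := by
  set g : ℝ → κ → ℝ := fun t => f (z₀ + t • w)
  have hderiv : HasDerivAt g (fderiv ℝ f z₀ w) 0 := by
    have hline : HasDerivAt (fun t : ℝ => z₀ + t • w) w 0 := by
      simpa using ((hasDerivAt_id' (0 : ℝ)).smul_const w).const_add z₀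
    exact hd.hasFDerivAt.comp_hasDerivAt_of_eq 0 hline (by simp)
  have hg0 : g 0 = 0 := by simp [g, h0]
  have hsq : ∀ t a b, g t a * g t b = t ^ 2 * (g 1 a * g 1 b) := by
    intro t a b
    obtain ⟨α, β, hαβ⟩ := exists_apply_add_smul_eq (hmul a b) z₀ w
    refine mul_eq_sq_mul_of_hasDerivAt (α := α) (β := β) (hasDerivAt_pi.1 hderiv a)
      (hasDerivAt_pi.1 hderiv b) (congrFun hg0 a) (congrFun hg0 b) (fun s => ?_) t
    simpa [h0] using hαβ s
  have hray := fun t (ht : 0 < t) => eq_smul_of_mul_eq_sq_mul (by fun_prop) hsq ht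
  simpa [g] using eq_of_hasDerivAt_of_eq_smul hderiv hg0 hray

theorem stmt17_general (n : ℕ) (φ ψ : Phase n → Phase n)
    (hφ : ContDiff ℝ 1 φ)
    (hl : Function.LeftInverse ψ φ) (hr : Function.RightInverse ψ φ)
    (hgauss : ∀ Sig : Matrix (Fin n ⊕ Fin n) (Fin n ⊕ Fin n) ℝ, InSpPlus n Sig →
      ∃ (Lam : Matrix (Fin n ⊕ Fin n) (Fin n ⊕ Fin n) ℝ) (zS : Phase n),
        InSpPlus n Lam ∧ ∀ z,
          Real.log (jac n φ z) - 2 * Real.pi * (φ z ⬝ᵥ (Sig⁻¹.mulVec (φ z))) =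
            -(2 * Real.pi) * ((z - zS) ⬝ᵥ (Lam⁻¹.mulVec (z - zS)))) :
    ∃ (M : Matrix (Fin n ⊕ Fin n) (Fin n ⊕ Fin n) ℝ) (a : Phase n),
      IsUnit M ∧ ∀ z, φ z = M.mulVec z + a := by
  set W := (quadraticPolynomials (Fin n ⊕ Fin n)).comap (quadFormAlong φ)
  have hsub : ∀ S₁ S₂, InSpPlus n S₁ → InSpPlus n S₂ → S₁ - S₂ ∈ W := by
    intro S₁ S₂ h₁ h₂
    obtain ⟨Λ₁, w₁, -, hq₁⟩ := hgauss S₁⁻¹ h₁.inv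
    obtain ⟨Λ₂, w₂, -, hq₂⟩ := hgauss S₂⁻¹ h₂.inv
    rw [nonsing_inv_nonsing_inv _ ((isUnit_iff_isUnit_det _).1 h₁.2.2.isUnit)] at hq₁
    rw [nonsing_inv_nonsing_inv _ ((isUnit_iff_isUnit_det _).1 h₂.2.2.isUnit)] at hq₂
    exact sub_mem_comap_quadFormAlong Real.two_pi_pos.ne' hq₁ hq₂
  have hmul := mul_apply_mem_quadraticPolynomials fun _ hB =>
    mem_of_isSymm_of_forall_inSpPlus_sub_mem hsub hB
  set z₀ := ψ 0
  set M := LinearMap.toMatrix' (fderiv ℝ φ z₀ : Phase n →ₗ[ℝ] Phase n)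
  have hM : ∀ w, M *ᵥ w = φ (z₀ + w) := fun w => by
    rw [apply_add_eq_fderiv_of_mul_mem_quadraticPolynomials hφ.continuous
      (hφ.differentiable one_ne_zero z₀) (hr 0) hmul w]
    simp [M]
  refine ⟨M, -(M *ᵥ z₀), mulVec_injective_iff_isUnit.1 fun x y hxy => ?_, fun z => ?_⟩
  · simpa using hl.injective (show φ (z₀ + x) = φ (z₀ + y) by rw [← hM, ← hM]; exact hxy)
  · rw [← sub_eq_add_neg, ← mulVec_sub, hM, add_sub_cancel]

/-- the Gaussian identity forces φ to be affine. -/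
theorem stmt17 (n : ℕ) (φ ψ : Phase n → Phase n)
    (hφ : ContDiff ℝ 1 φ) (hψ : ContDiff ℝ 1 ψ)
    (hl : Function.LeftInverse ψ φ) (hr : Function.RightInverse ψ φ)
    (hJ : ∀ z, 0 < jac n φ z ∧ jac n φ z ≤ 1)
    (hgauss : ∀ Sig : Matrix (Fin n ⊕ Fin n) (Fin n ⊕ Fin n) ℝ, InSpPlus n Sig →
      ∃ (Lam : Matrix (Fin n ⊕ Fin n) (Fin n ⊕ Fin n) ℝ) (zS : Phase n),
        InSpPlus n Lam ∧ ∀ z,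
          Real.log (jac n φ z) - 2 * Real.pi * (φ z ⬝ᵥ (Sig⁻¹.mulVec (φ z))) =
            -(2 * Real.pi) * ((z - zS) ⬝ᵥ (Lam⁻¹.mulVec (z - zS)))) :
    ∃ (M : Matrix (Fin n ⊕ Fin n) (Fin n ⊕ Fin n) ℝ) (a : Phase n),
      IsUnit M ∧ ∀ z, φ z = M.mulVec z + a :=
  stmt17_general n φ ψ hφ hl hr hgauss
end
end

section
/- Let φ : ℝ²ⁿ → ℝ²ⁿ be a C¹ diffeomorphism with Jacobian J(z) = |det Dφ(z)| satisfying 0 < J(z) ≤ 1 for all z ∈ ℝ²ⁿ. Let Σ ∈ Sp⁺(n), Λ ∈ Sp⁺(n) and z_Σ ∈ ℝ²ⁿ be such that ln J(z) − 2π·φ(z)·Σ⁻¹φ(z) = −2π·(z − z_Σ)·Λ⁻¹(z − z_Σ) for all z ∈ ℝ²ⁿ. Then φ(z_Σ) = 0, i.e. z_Σ = φ⁻¹(0); in particular z_Σ does not depend on the choice of Σ. -/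
open MeasureTheory Complex Filter Matrix

noncomputable section

/-
At `z = z_Σ` the right-hand side vanishes, so `ln J(z_Σ) = 2π · φ(z_Σ)·Σ⁻¹φ(z_Σ)`. The left side is
`≤ 0` because `J ≤ 1`, the right side is `≥ 0` and vanishes only at `φ(z_Σ) = 0` because `Σ⁻¹` is
positive definite.
-/

theorem Matrix.PosDef.eq_zero_of_dotProduct_mulVec_self_nonpos {ι : Type*} [Fintype ι]
    {A : Matrix ι ι ℝ} (hA : A.PosDef) {v : ι → ℝ} (hv : v ⬝ᵥ A *ᵥ v ≤ 0) : v = 0 := by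
  by_contra hne
  have hpos : 0 < v ⬝ᵥ A *ᵥ v := by simpa only [star_trivial] using hA.dotProduct_mulVec_pos hne
  exact hpos.not_ge hv

theorem stmt18_general (n : ℕ) (φ ψ : Phase n → Phase n)
    (hl : Function.LeftInverse ψ φ)
    (hJ : ∀ z, 0 < jac n φ z ∧ jac n φ z ≤ 1)
    (Sig Lam : Matrix (Fin n ⊕ Fin n) (Fin n ⊕ Fin n) ℝ) (zS : Phase n)
    (hSig : InSpPlus n Sig)
    (heq : ∀ z,
      Real.log (jac n φ z) - 2 * Real.pi * (φ z ⬝ᵥ (Sig⁻¹.mulVec (φ z))) =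
        -(2 * Real.pi) * ((z - zS) ⬝ᵥ (Lam⁻¹.mulVec (z - zS)))) :
    φ zS = 0 ∧ zS = ψ 0 := by
  have hcentre : Real.log (jac n φ zS) = 2 * Real.pi * (φ zS ⬝ᵥ Sig⁻¹ *ᵥ φ zS) := by
    have h := heq zS
    rw [sub_self, zero_dotProduct, mul_zero, sub_eq_zero] at h
    exact h
  have hlog : Real.log (jac n φ zS) ≤ 0 := Real.log_nonpos (hJ zS).1.le (hJ zS).2
  have hquad : φ zS ⬝ᵥ Sig⁻¹ *ᵥ φ zS ≤ 0 :=
    nonpos_of_mul_nonpos_right (hcentre ▸ hlog) (by positivity)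
  have hzero : φ zS = 0 := hSig.2.2.inv.eq_zero_of_dotProduct_mulVec_self_nonpos hquad
  exact ⟨hzero, by rw [← hzero, hl zS]⟩

/-- the centre of the transformed Gaussian is φ⁻¹(0). -/
theorem stmt18 (n : ℕ) (φ ψ : Phase n → Phase n)
    (hφ : ContDiff ℝ 1 φ) (hψ : ContDiff ℝ 1 ψ)
    (hl : Function.LeftInverse ψ φ) (hr : Function.RightInverse ψ φ)
    (hJ : ∀ z, 0 < jac n φ z ∧ jac n φ z ≤ 1)
    (Sig Lam : Matrix (Fin n ⊕ Fin n) (Fin n ⊕ Fin n) ℝ) (zS : Phase n)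
    (hSig : InSpPlus n Sig) (hLam : InSpPlus n Lam)
    (heq : ∀ z,
      Real.log (jac n φ z) - 2 * Real.pi * (φ z ⬝ᵥ (Sig⁻¹.mulVec (φ z))) =
        -(2 * Real.pi) * ((z - zS) ⬝ᵥ (Lam⁻¹.mulVec (z - zS)))) :
    φ zS = 0 ∧ zS = ψ 0 :=
  stmt18_general n φ ψ hl hJ Sig Lam zS hSig heq

end
end
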